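/- arXiv:2412.07971 — 3 statements merged into one kernel-verified Lean document; each statement's English description precedes it below -/
import Mathlib

section
/- Let P₁,…,P_M be orthogonal projections in ℝᵈ onto subspaces V₁,…,V_M, and P̄ = (1/M)Σᵢ Pᵢ. If v lies in the span of V₁ ∪ ⋯ ∪ V_M, then (I - P̄)ᵏ v → 0 as k → ∞. -/
open Matrix Filter

/-- If `P₁,…,P_M` are orthogonal projections onto subspaces `V₁,…,V_M` of `ℝᵈ` and
`P̄ = (1/M)Σᵢ Pᵢ`, then for every `v` in the span of `V₁ ∪ ⋯ ∪ V_M`,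
`(I - P̄)ᵏ v → 0` as `k → ∞`. -/
theorem stmt_3 {d M : ℕ} (hM : 0 < M) (P : Fin M → Matrix (Fin d) (Fin d) ℝ)
    (hsymm : ∀ i, (P i)ᵀ = P i) (hidem : ∀ i, P i * P i = P i)
    (v : Fin d → ℝ)
    (hv : v ∈ Submodule.span ℝ (⋃ i, Set.range ((P i).mulVec))) :
    Tendsto (fun k : ℕ => ((1 - (M : ℝ)⁻¹ • ∑ i, P i) ^ k).mulVec v) atTop (nhds 0) := by
  classical
  set Q : Matrix (Fin d) (Fin d) ℝ := 1 - (M : ℝ)⁻¹ • ∑ i, P i with hQdef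
  -- Q is symmetric / hermitian
  have hQherm : Q.IsHermitian := by
    have ht : Qᵀ = Q := by
      simp [hQdef, Matrix.transpose_sub, Matrix.transpose_smul, Matrix.transpose_sum, hsymm]
    simpa [Matrix.IsHermitian, Matrix.conjTranspose_eq_transpose_of_trivial] using ht
  have hswap : ∀ (i : Fin M) (w : Fin d → ℝ), w ᵥ* P i = P i *ᵥ w := by
    intro i w
    nth_rewrite 1 [← hsymm i]
    rw [Matrix.vecMul_transpose]
  -- basic fact: w ⬝ᵥ (P i *ᵥ w) = ‖P i w‖²
  have hPi : ∀ (i : Fin M) (w : Fin d → ℝ),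
      w ⬝ᵥ (P i *ᵥ w) = (P i *ᵥ w) ⬝ᵥ (P i *ᵥ w) := by
    intro i w
    conv_lhs => rw [← hidem i, ← Matrix.mulVec_mulVec, Matrix.dotProduct_mulVec, hswap i]
  have hdots : ∀ w : Fin d → ℝ, (0:ℝ) ≤ w ⬝ᵥ w := by
    intro w
    exact Finset.sum_nonneg fun i _ => mul_self_nonneg _
  -- each projection is a contraction in the quadratic-form sense
  have hub : ∀ (i : Fin M) (w : Fin d → ℝ),
      (P i *ᵥ w) ⬝ᵥ (P i *ᵥ w) ≤ w ⬝ᵥ w := by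
    intro i w
    have h0 : (0:ℝ) ≤ (w - P i *ᵥ w) ⬝ᵥ (w - P i *ᵥ w) := hdots _
    have hexp : (w - P i *ᵥ w) ⬝ᵥ (w - P i *ᵥ w)
        = w ⬝ᵥ w - (P i *ᵥ w) ⬝ᵥ (P i *ᵥ w) := by
      have hcomm : (P i *ᵥ w) ⬝ᵥ w = w ⬝ᵥ (P i *ᵥ w) := dotProduct_comm _ _
      simp only [sub_dotProduct, dotProduct_sub]
      rw [hPi i w, hcomm, hPi i w]
      ring
    linarith [h0, hexp ▸ h0]
  -- quadratic form of Q
  have hquad : ∀ w : Fin d → ℝ,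
      w ⬝ᵥ (Q *ᵥ w) = w ⬝ᵥ w - (M:ℝ)⁻¹ * ∑ i, (P i *ᵥ w) ⬝ᵥ (P i *ᵥ w) := by
    intro w
    have hsumMV : (∑ i, P i) *ᵥ w = ∑ i, P i *ᵥ w := by
      funext j
      simp only [Matrix.mulVec, dotProduct, Matrix.sum_apply, Finset.sum_apply,
        Finset.sum_mul]
      rw [Finset.sum_comm]
    have hdps : w ⬝ᵥ (∑ i, P i *ᵥ w) = ∑ i, w ⬝ᵥ (P i *ᵥ w) := by
      simp only [dotProduct, Finset.mul_sum, Finset.sum_apply]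
      rw [Finset.sum_comm]
    have : Q *ᵥ w = w - (M:ℝ)⁻¹ • ∑ i, P i *ᵥ w := by
      simp [hQdef, Matrix.sub_mulVec, Matrix.smul_mulVec, hsumMV]
    rw [this]
    simp only [dotProduct_sub, dotProduct_smul, smul_eq_mul]
    rw [hdps]
    congr 1
    congr 1
    exact Finset.sum_congr rfl fun i _ => hPi i w
  -- eigen decomposition
  set b := hQherm.eigenvectorBasis with hb
  set μ := hQherm.eigenvalues with hμ
  set e : Fin d → Fin d → ℝ := fun j => ⇑(b j) with he
  have heig : ∀ j, Q *ᵥ e j = μ j • e j := fun j => hQherm.mulVec_eigenvectorBasis j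
  have hpow : ∀ (k : ℕ) (j : Fin d), (Q ^ k) *ᵥ e j = μ j ^ k • e j := by
    intro k j
    induction k with
    | zero => simp
    | succ k ih =>
      rw [pow_succ, ← Matrix.mulVec_mulVec, heig j, Matrix.mulVec_smul, ih, smul_smul,
        ← pow_succ']
  -- each eigenvector has unit dot-product with itself
  have hunit : ∀ j, e j ⬝ᵥ e j = 1 := by
    intro j
    have h := (orthonormal_iff_ite.mp b.orthonormal) j j
    simp only [if_pos rfl] at h
    rw [if_pos trivial] at h
    rw [← h]
    simp only [PiLp.inner_apply, RCLike.inner_apply, conj_trivial]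
    exact Finset.sum_congr rfl fun i _ => mul_comm _ _
  -- eigenvalue formula
  have hμeq : ∀ j, μ j = e j ⬝ᵥ (Q *ᵥ e j) := by
    intro j
    rw [heig j]
    simp [dotProduct_smul, hunit j]
  -- eigenvalues lie in [0, 1]
  have hμ01 : ∀ j, 0 ≤ μ j ∧ μ j ≤ 1 := by
    intro j
    have hq := hquad (e j)
    rw [hunit j] at hq
    have hsum_nonneg : (0:ℝ) ≤ ∑ i, (P i *ᵥ e j) ⬝ᵥ (P i *ᵥ e j) :=
      Finset.sum_nonneg fun i _ => hdots _
    have hsum_le : ∑ i, (P i *ᵥ e j) ⬝ᵥ (P i *ᵥ e j) ≤ (M:ℝ) := by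
      calc ∑ i, (P i *ᵥ e j) ⬝ᵥ (P i *ᵥ e j) ≤ ∑ _i : Fin M, (1:ℝ) := by
            apply Finset.sum_le_sum
            intro i _
            have := hub i (e j)
            rwa [hunit j] at this
        _ = (M:ℝ) := by simp
    have hMpos : (0:ℝ) < (M:ℝ) := by exact_mod_cast hM
    have hMinv : (0:ℝ) ≤ (M:ℝ)⁻¹ := by positivity
    constructor
    · rw [hμeq j, hq]
      have : (M:ℝ)⁻¹ * ∑ i, (P i *ᵥ e j) ⬝ᵥ (P i *ᵥ e j) ≤ (M:ℝ)⁻¹ * (M:ℝ) :=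
        mul_le_mul_of_nonneg_left hsum_le hMinv
      rw [inv_mul_cancel₀ (ne_of_gt hMpos)] at this
      linarith
    · rw [hμeq j, hq]
      nlinarith
  -- if μ j = 1 then e j is orthogonal to every range, hence to v
  have hker : ∀ j, μ j = 1 → v ⬝ᵥ e j = 0 := by
    intro j hj
    have hq := hquad (e j)
    rw [hunit j, ← hμeq j, hj] at hq
    have hMpos : (0:ℝ) < (M:ℝ) := by exact_mod_cast hM
    have hsum0 : ∑ i, (P i *ᵥ e j) ⬝ᵥ (P i *ᵥ e j) = 0 := by
      have h1 : (M:ℝ)⁻¹ * ∑ i, (P i *ᵥ e j) ⬝ᵥ (P i *ᵥ e j) = 0 := by linarith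
      rcases mul_eq_zero.mp h1 with h | h
      · exact absurd h (by positivity)
      · exact h
    have hall : ∀ i : Fin M, P i *ᵥ e j = 0 := by
      intro i
      have hz : (P i *ᵥ e j) ⬝ᵥ (P i *ᵥ e j) = 0 :=
        (Finset.sum_eq_zero_iff_of_nonneg
          (fun i _ => hdots (P i *ᵥ e j))).mp hsum0 i (Finset.mem_univ i)
      exact dotProduct_self_eq_zero.mp hz
    -- v is in the span of the union of ranges; all those are ⟂ e j
    have hsub : (⋃ i, Set.range ((P i).mulVec)) ⊆
        {u : Fin d → ℝ | u ⬝ᵥ e j = 0} := by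
      rintro u hu
      simp only [Set.mem_iUnion, Set.mem_range] at hu
      obtain ⟨i, x, rfl⟩ := hu
      show (P i *ᵥ x) ⬝ᵥ e j = 0
      rw [← hswap i, ← Matrix.dotProduct_mulVec, hall i, dotProduct_zero]
    let W : Submodule ℝ (Fin d → ℝ) :=
      { carrier := {u : Fin d → ℝ | u ⬝ᵥ e j = 0}
        add_mem' := by
          intro a c ha hc
          simp only [Set.mem_setOf_eq] at *
          rw [add_dotProduct, ha, hc, add_zero]
        zero_mem' := by simp
        smul_mem' := by
          intro r a ha
          simp only [Set.mem_setOf_eq] at *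
          rw [smul_dotProduct, ha, smul_zero] }
    have hle : Submodule.span ℝ (⋃ i, Set.range ((P i).mulVec)) ≤ W :=
      Submodule.span_le.mpr hsub
    exact hle hv
  -- decompose v in the eigenbasis
  set v' : EuclideanSpace ℝ (Fin d) := (WithLp.equiv 2 (Fin d → ℝ)).symm v with hv'
  set c : Fin d → ℝ := fun j => b.repr v' j with hc
  have hv_eq : v = ∑ j, c j • e j := by
    calc v = (WithLp.equiv 2 (Fin d → ℝ)) v' := rfl
      _ = (WithLp.equiv 2 (Fin d → ℝ)) (∑ j, c j • b j) := by rw [b.sum_repr v']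
      _ = ∑ j, (WithLp.equiv 2 (Fin d → ℝ)) (c j • b j) := by
          exact map_sum (WithLp.linearEquiv 2 ℝ (Fin d → ℝ)) (fun j => c j • b j) Finset.univ
      _ = ∑ j, c j • e j := rfl
  -- coefficients vanish on eigenvalue-1 eigenvectors
  have hcoef : ∀ j, μ j = 1 → c j = 0 := by
    intro j hj
    have hrr : c j = @inner ℝ _ _ (b j) v' := b.repr_apply_apply v' j
    have hinner : (@inner ℝ _ _ (b j) v' : ℝ) = e j ⬝ᵥ v := by
      simp only [PiLp.inner_apply, RCLike.inner_apply, conj_trivial, dotProduct]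
      exact Finset.sum_congr rfl fun i _ => mul_comm _ _
    rw [hrr, hinner, dotProduct_comm]
    exact hker j hj
  -- main computation
  have hmain : ∀ k : ℕ, (Q ^ k) *ᵥ v = ∑ j, (μ j ^ k * c j) • e j := by
    intro k
    conv_lhs => rw [hv_eq]
    rw [← Matrix.mulVecLin_apply, map_sum]
    refine Finset.sum_congr rfl fun j _ => ?_
    rw [LinearMap.map_smul, Matrix.mulVecLin_apply, hpow k j, smul_smul, mul_comm]
  -- convergence of each term
  have hterm : ∀ j, Tendsto (fun k : ℕ => (μ j ^ k * c j) • e j)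
      atTop (nhds 0) := by
    intro j
    rcases lt_or_eq_of_le (hμ01 j).2 with hlt | heq1
    · have h0 : Tendsto (fun k : ℕ => μ j ^ k) atTop (nhds 0) :=
        tendsto_pow_atTop_nhds_zero_of_lt_one (hμ01 j).1 hlt
      have := (h0.mul_const (c j)).smul_const (e j)
      simpa using this
    · have hc0 := hcoef j heq1
      simp only [hc0, mul_zero, zero_smul]
      exact tendsto_const_nhds
  have hsum := tendsto_finset_sum Finset.univ (fun j _ => hterm j)
  simp only [Finset.sum_const_zero] at hsum
  have hfinal : Tendsto (fun k : ℕ => (Q ^ k) *ᵥ v) atTop (nhds 0) := by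
    convert hsum using 1
    funext k
    exact hmain k
  exact hfinal
end

section
/- For Local-GD on overparameterized linear regression with initialization w₀⁰ = 0, the global model w₀ᴷ converges to the centralized minimum-norm interpolator w_c = X_cᵀ(X_c X_cᵀ)⁻¹ y_c as K → ∞, where X_c stacks all local data matrices X₁,…,X_M and y_c stacks all labels. -/
open Matrix Filter

noncomputable def mve {n m : Type*} [Fintype n] [Fintype m] [DecidableEq n] [DecidableEq m]
    (A : Matrix n m ℝ) : EuclideanSpace ℝ m →ₗ[ℝ] EuclideanSpace ℝ n :=
  Matrix.toEuclideanLin A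

lemma mve_apply {n m : Type*} [Fintype n] [Fintype m] [DecidableEq n] [DecidableEq m]
    (A : Matrix n m ℝ) (x : EuclideanSpace ℝ m) (q : n) : mve A x q = A.mulVec x q := rfl

lemma mve_symm {n m : Type*} [Fintype n] [Fintype m] [DecidableEq n] [DecidableEq m]
    (A : Matrix n m ℝ) (x : m → ℝ) :
    mve A ((WithLp.equiv 2 (m → ℝ)).symm x) = (WithLp.equiv 2 (n → ℝ)).symm (A *ᵥ x) := rfl

lemma mve_mul {n m l : Type*} [Fintype n] [Fintype m] [Fintype l] [DecidableEq n]
    [DecidableEq m] [DecidableEq l] (A : Matrix n m ℝ) (B : Matrix m l ℝ)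
    (x : EuclideanSpace ℝ l) : mve (A * B) x = mve A (mve B x) := by
  ext q
  rw [mve_apply, ← Matrix.mulVec_mulVec]
  rfl

lemma mve_one {n : Type*} [Fintype n] [DecidableEq n] (x : EuclideanSpace ℝ n) :
    mve (1 : Matrix n n ℝ) x = x := by
  ext q
  exact congrFun (Matrix.one_mulVec (x : n → ℝ)) q

lemma mve_inner {n m : Type*} [Fintype n] [Fintype m] [DecidableEq n] [DecidableEq m]
    (A : Matrix n m ℝ) (x : EuclideanSpace ℝ m) (y : EuclideanSpace ℝ n) :
    inner (𝕜 := ℝ) (mve A x) y = inner (𝕜 := ℝ) x (mve Aᵀ y) := by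
  unfold mve
  rw [← Matrix.conjTranspose_eq_transpose_of_trivial,
    Matrix.toEuclideanLin_conjTranspose_eq_adjoint]
  exact (LinearMap.adjoint_inner_right _ _ _).symm

lemma sum_mulVec' {ι n m : Type*} [Fintype ι] [Fintype m] (A : ι → Matrix n m ℝ) (v : m → ℝ) :
    (∑ i, A i) *ᵥ v = ∑ i, (A i *ᵥ v) := by
  funext q
  simp only [Matrix.mulVec, dotProduct, Matrix.sum_apply, Finset.sum_apply,
    Finset.sum_mul]
  rw [Finset.sum_comm]

lemma hXP {N d : ℕ} (A : Matrix (Fin N) (Fin d) ℝ) (hA : IsUnit (A * Aᵀ)) :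
    A * (Aᵀ * (A * Aᵀ)⁻¹ * A) = A := by
  have h : (A * Aᵀ) * (A * Aᵀ)⁻¹ = 1 :=
    Matrix.mul_nonsing_inv _ ((Matrix.isUnit_iff_isUnit_det _).mp hA)
  calc A * (Aᵀ * (A * Aᵀ)⁻¹ * A) = ((A * Aᵀ) * (A * Aᵀ)⁻¹) * A := by
        simp only [Matrix.mul_assoc]
    _ = A := by rw [h, Matrix.one_mul]

lemma hPsymm {N d : ℕ} (A : Matrix (Fin N) (Fin d) ℝ) :
    (Aᵀ * (A * Aᵀ)⁻¹ * A)ᵀ = Aᵀ * (A * Aᵀ)⁻¹ * A := by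
  have hB : ((A * Aᵀ)⁻¹)ᵀ = (A * Aᵀ)⁻¹ := by
    rw [Matrix.transpose_nonsing_inv, Matrix.transpose_mul, Matrix.transpose_transpose]
  simp [Matrix.transpose_mul, hB, Matrix.mul_assoc]

lemma hPP {N d : ℕ} (A : Matrix (Fin N) (Fin d) ℝ) (hA : IsUnit (A * Aᵀ)) :
    (Aᵀ * (A * Aᵀ)⁻¹ * A) * (Aᵀ * (A * Aᵀ)⁻¹ * A) = Aᵀ * (A * Aᵀ)⁻¹ * A := by
  calc (Aᵀ * (A * Aᵀ)⁻¹ * A) * (Aᵀ * (A * Aᵀ)⁻¹ * A)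
      = Aᵀ * (A * Aᵀ)⁻¹ * (A * (Aᵀ * (A * Aᵀ)⁻¹ * A)) := by simp only [Matrix.mul_assoc]
    _ = Aᵀ * (A * Aᵀ)⁻¹ * A := by rw [hXP A hA]

lemma proj_pyth {d : ℕ} (P : Matrix (Fin d) (Fin d) ℝ) (hs : Pᵀ = P) (hi : P * P = P)
    (v : EuclideanSpace ℝ (Fin d)) :
    ‖v - mve P v‖ ^ 2 + ‖mve P v‖ ^ 2 = ‖v‖ ^ 2 := by
  set p := mve P v with hp
  have hpp : inner (𝕜 := ℝ) p p = inner (𝕜 := ℝ) v p := by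
    rw [hp, mve_inner, ← mve_mul, hs, hi]
  have horth : inner (𝕜 := ℝ) p (v - p) = 0 := by
    rw [inner_sub_right, hpp, real_inner_comm p v, sub_self]
  have hv : v = p + (v - p) := by abel
  have := norm_add_sq_real p (v - p)
  rw [horth] at this
  nlinarith [this, congrArg (fun x => ‖x‖ ^ 2) hv]

lemma proj_le {d : ℕ} (P : Matrix (Fin d) (Fin d) ℝ) (hs : Pᵀ = P) (hi : P * P = P)
    (v : EuclideanSpace ℝ (Fin d)) : ‖v - mve P v‖ ≤ ‖v‖ := by
  have h := proj_pyth P hs hi v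
  nlinarith [norm_nonneg (v - mve P v), norm_nonneg v, sq_nonneg ‖mve P v‖]

lemma proj_lt {d : ℕ} (P : Matrix (Fin d) (Fin d) ℝ) (hs : Pᵀ = P) (hi : P * P = P)
    (v : EuclideanSpace ℝ (Fin d)) (hnz : mve P v ≠ 0) : ‖v - mve P v‖ < ‖v‖ := by
  have h := proj_pyth P hs hi v
  have h2 : 0 < ‖mve P v‖ := norm_pos_iff.mpr hnz
  nlinarith [norm_nonneg (v - mve P v), norm_nonneg v]

/-- Convergence of Local-GD to the centralized minimum-norm interpolator:
with `w₀⁰ = 0` and exact local min-norm solves followed by averaging, the global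
model `w₀ᴷ` converges to `w_c = X_cᵀ(X_c X_cᵀ)⁻¹ y_c`, where `X_c, y_c` stack all
local data matrices and labels. -/
theorem stmt_7 {N d M : ℕ} (hM : 0 < M) (hd : M * N < d)
    (X : Fin M → Matrix (Fin N) (Fin d) ℝ)
    (hX : ∀ i, IsUnit (X i * (X i)ᵀ))
    (y : Fin M → Fin N → ℝ)
    (Xc : Matrix (Fin M × Fin N) (Fin d) ℝ) (hXc : ∀ p q, Xc p q = X p.1 p.2 q)
    (yc : Fin M × Fin N → ℝ) (hyc : ∀ p, yc p = y p.1 p.2)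
    (hXcUnit : IsUnit (Xc * Xcᵀ))
    (w₀ : ℕ → Fin d → ℝ) (hinit : w₀ 0 = 0)
    (hrec : ∀ k, w₀ (k + 1) = (M : ℝ)⁻¹ •
      ∑ i, ((1 - (X i)ᵀ * (X i * (X i)ᵀ)⁻¹ * X i).mulVec (w₀ k)
            + ((X i)ᵀ * (X i * (X i)ᵀ)⁻¹).mulVec (y i))) :
    Tendsto (fun K => w₀ K) atTop (nhds ((Xcᵀ * (Xc * Xcᵀ)⁻¹).mulVec yc)) := by
  classical
  have hMR : (0 : ℝ) < (M : ℝ) := by exact_mod_cast hM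
  set Pm : Fin M → Matrix (Fin d) (Fin d) ℝ :=
    fun i => (X i)ᵀ * (X i * (X i)ᵀ)⁻¹ * X i with hPmdef
  set T : Matrix (Fin d) (Fin d) ℝ := (M : ℝ)⁻¹ • ∑ i, (1 - Pm i) with hTdef
  set bv : Fin d → ℝ := (M : ℝ)⁻¹ • ∑ i, ((X i)ᵀ * (X i * (X i)ᵀ)⁻¹).mulVec (y i) with hbvdef
  set wc : Fin d → ℝ := (Xcᵀ * (Xc * Xcᵀ)⁻¹).mulVec yc with hwcdef
  -- recurrence in affine form
  have hrec' : ∀ k, w₀ (k + 1) = T *ᵥ (w₀ k) + bv := by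
    intro k
    rw [hrec k, Finset.sum_add_distrib, smul_add, hTdef, Matrix.smul_mulVec,
      sum_mulVec']
  -- wc interpolates each local dataset
  have hXcwc : Xc *ᵥ wc = yc := by
    rw [hwcdef, Matrix.mulVec_mulVec, ← Matrix.mul_assoc,
      Matrix.mul_nonsing_inv _ ((Matrix.isUnit_iff_isUnit_det _).mp hXcUnit),
      Matrix.one_mulVec]
  have hyi : ∀ i, (X i) *ᵥ wc = y i := by
    intro i
    funext j
    have h1 : (X i *ᵥ wc) j = (Xc *ᵥ wc) (i, j) := by
      simp [Matrix.mulVec, dotProduct, hXc]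
    rw [h1, hXcwc, hyc]
  -- fixed point
  have hfix : wc = T *ᵥ wc + bv := by
    have hbi : ∀ i : Fin M, ((X i)ᵀ * (X i * (X i)ᵀ)⁻¹) *ᵥ (y i) = Pm i *ᵥ wc := by
      intro i
      rw [← hyi i, Matrix.mulVec_mulVec]
    have hTwc : T *ᵥ wc = (M : ℝ)⁻¹ • ∑ i, (wc - Pm i *ᵥ wc) := by
      rw [hTdef, Matrix.smul_mulVec, sum_mulVec']
      congr 1
      refine Finset.sum_congr rfl fun i _ => ?_
      rw [Matrix.sub_mulVec, Matrix.one_mulVec]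
    rw [hTwc, hbvdef]
    simp only [hbi]
    rw [← smul_add, ← Finset.sum_add_distrib]
    have : ∀ i : Fin M, wc - Pm i *ᵥ wc + Pm i *ᵥ wc = wc := fun i => sub_add_cancel _ _
    simp only [this]
    rw [Finset.sum_const, Finset.card_univ, Fintype.card_fin, ← Nat.cast_smul_eq_nsmul ℝ,
      smul_smul, inv_mul_cancel₀ (ne_of_gt hMR), one_smul]
  -- move to Euclidean space
  set sy := (WithLp.equiv 2 (Fin d → ℝ)).symm with hsydef
  set wcE : EuclideanSpace ℝ (Fin d) := sy wc with hwcEdef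
  set S : Submodule ℝ (EuclideanSpace ℝ (Fin d)) := LinearMap.range (mve Xcᵀ) with hSdef
  -- expansion of `mve T`
  have hTv : ∀ v : EuclideanSpace ℝ (Fin d),
      mve T v = (M : ℝ)⁻¹ • ∑ i, (v - mve (Pm i) v) := by
    intro v
    unfold mve
    rw [hTdef, _root_.map_smul, map_sum]
    simp only [LinearMap.smul_apply, LinearMap.sum_apply, map_sub, LinearMap.sub_apply,
      show (Matrix.toEuclideanLin (1 : Matrix (Fin d) (Fin d) ℝ)) v = v from mve_one v]
  -- each local row space is inside S
  have hrangele : ∀ (i : Fin M) (u : EuclideanSpace ℝ (Fin N)), mve (X i)ᵀ u ∈ S := by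
    intro i u
    refine ⟨(WithLp.equiv 2 (Fin M × Fin N → ℝ)).symm
      (fun p => if p.1 = i then u p.2 else 0), ?_⟩
    rw [mve_symm]
    have : Xcᵀ *ᵥ (fun p => if p.1 = i then u p.2 else 0) = (X i)ᵀ *ᵥ (u : Fin N → ℝ) := by
      funext q
      simp only [Matrix.mulVec, dotProduct, Matrix.transpose_apply]
      rw [Fintype.sum_prod_type]
      simp [hXc, Finset.sum_ite_eq', mul_ite]
    rw [this]
    rfl
  have hPmS : ∀ (i : Fin M) (v : EuclideanSpace ℝ (Fin d)), mve (Pm i) v ∈ S := by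
    intro i v
    have h : Pm i = (X i)ᵀ * ((X i * (X i)ᵀ)⁻¹ * X i) := Matrix.mul_assoc _ _ _
    rw [h, mve_mul]
    exact hrangele i _
  have hwcS : wcE ∈ S := by
    refine ⟨(WithLp.equiv 2 (Fin M × Fin N → ℝ)).symm ((Xc * Xcᵀ)⁻¹ *ᵥ yc), ?_⟩
    rw [mve_symm, Matrix.mulVec_mulVec]
  have hTS : ∀ v ∈ S, mve T v ∈ S := by
    intro v hv
    rw [hTv v]
    exact S.smul_mem _ (Submodule.sum_mem S fun i _ => S.sub_mem hv (hPmS i v))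
  -- norm bound: contraction on S
  have hnorm_le : ∀ v : EuclideanSpace ℝ (Fin d),
      ‖mve T v‖ ≤ (M : ℝ)⁻¹ * ∑ i, ‖v - mve (Pm i) v‖ := by
    intro v
    rw [hTv v, norm_smul]
    gcongr
    · simp [abs_of_nonneg (le_of_lt (inv_pos.mpr hMR))]
    · exact norm_sum_le _ _
  have hstrict : ∀ v : EuclideanSpace ℝ (Fin d), v ∈ S → ‖v‖ = 1 → ‖mve T v‖ < 1 := by
    intro v hvS hv1
    by_cases hnz : ∃ j, mve (Pm j) v ≠ 0
    · obtain ⟨j, hj⟩ := hnz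
      have hsum : ∑ i, ‖v - mve (Pm i) v‖ < ∑ _i : Fin M, (1 : ℝ) := by
        refine Finset.sum_lt_sum (fun i _ => ?_) ⟨j, Finset.mem_univ j, ?_⟩
        · rw [← hv1]; exact proj_le _ (hPsymm (X i)) (hPP (X i) (hX i)) v
        · rw [← hv1]; exact proj_lt _ (hPsymm (X j)) (hPP (X j) (hX j)) v hj
      have h2 : (M : ℝ)⁻¹ * ∑ i, ‖v - mve (Pm i) v‖ < (M : ℝ)⁻¹ * (M : ℝ) := by
        apply mul_lt_mul_of_pos_left _ (inv_pos.mpr hMR)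
        simpa using hsum
      calc ‖mve T v‖ ≤ (M : ℝ)⁻¹ * ∑ i, ‖v - mve (Pm i) v‖ := hnorm_le v
        _ < (M : ℝ)⁻¹ * (M : ℝ) := h2
        _ = 1 := inv_mul_cancel₀ (ne_of_gt hMR)
    · push_neg at hnz
      exfalso
      -- then X i v = 0 for all i, hence Xc v = 0, hence v ⟂ S, hence v = 0
      have hXv : ∀ i, (X i) *ᵥ (v : Fin d → ℝ) = 0 := by
        intro i
        have hPv : Pm i *ᵥ (v : Fin d → ℝ) = 0 := by
          funext q
          exact congrFun (congrArg (fun z : EuclideanSpace ℝ (Fin d) => (z : Fin d → ℝ))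
            (hnz i)) q
        have hXPi : X i * Pm i = X i := hXP (X i) (hX i)
        calc (X i) *ᵥ (v : Fin d → ℝ) = (X i * Pm i) *ᵥ v := by rw [hXPi]
          _ = (X i) *ᵥ (Pm i *ᵥ v) := by rw [Matrix.mulVec_mulVec]
          _ = 0 := by rw [hPv]; exact Matrix.mulVec_zero _
      have hXcv : mve Xc v = 0 := by
        ext p
        rw [mve_apply]
        have : (Xc *ᵥ (v : Fin d → ℝ)) p = ((X p.1) *ᵥ (v : Fin d → ℝ)) p.2 := by
          simp [Matrix.mulVec, dotProduct, hXc]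
        rw [this, hXv p.1]
        rfl
      have hvv : inner (𝕜 := ℝ) v v = 0 := by
        obtain ⟨u, hu⟩ := hvS
        nth_rewrite 1 [← hu]
        rw [mve_inner, Matrix.transpose_transpose, hXcv, inner_zero_right]
      have : v = 0 := inner_self_eq_zero.mp hvv
      rw [this, norm_zero] at hv1
      norm_num at hv1
  -- obtain contraction constant via compactness
  obtain ⟨c, hc0, hc1, hcb⟩ : ∃ c : ℝ, 0 ≤ c ∧ c < 1 ∧
      ∀ v ∈ S, ‖mve T v‖ ≤ c * ‖v‖ := by
    have hScl : IsClosed (S : Set (EuclideanSpace ℝ (Fin d))) :=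
      Submodule.closed_of_finiteDimensional S
    set K := (S : Set (EuclideanSpace ℝ (Fin d))) ∩ Metric.sphere 0 1 with hKdef
    have hKc : IsCompact K := (isCompact_sphere 0 1).inter_left hScl
    have hcont : Continuous fun v : EuclideanSpace ℝ (Fin d) => ‖mve T v‖ :=
      ((mve T).continuous_of_finiteDimensional).norm
    rcases K.eq_empty_or_nonempty with hKe | hKne
    · refine ⟨0, le_refl 0, one_pos, fun v hv => ?_⟩
      have hv0 : v = 0 := by
        by_contra hne
        have h1 : ‖v‖⁻¹ • v ∈ K := by
          constructor
          · exact S.smul_mem _ hv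
          · simp [norm_smul, abs_of_nonneg (inv_nonneg.mpr (norm_nonneg v)),
              inv_mul_cancel₀ (norm_ne_zero_iff.mpr hne)]
        rw [hKe] at h1
        exact h1
      rw [hv0, map_zero]
      simp
    · obtain ⟨v₀, hv₀K, hmax⟩ := hKc.exists_isMaxOn hKne hcont.continuousOn
      refine ⟨‖mve T v₀‖, norm_nonneg _, ?_, ?_⟩
      · exact hstrict v₀ hv₀K.1 (by simpa using hv₀K.2)
      · intro v hv
        by_cases hne : v = 0
        · rw [hne, map_zero]
          simp
        · have hvn : ‖v‖ ≠ 0 := norm_ne_zero_iff.mpr hne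
          set u : EuclideanSpace ℝ (Fin d) := ‖v‖⁻¹ • v with hudef
          have huK : u ∈ K := by
            constructor
            · exact S.smul_mem _ hv
            · simp [hudef, norm_smul, abs_of_nonneg (inv_nonneg.mpr (norm_nonneg v)),
                inv_mul_cancel₀ hvn]
          have h1 : ‖mve T u‖ ≤ ‖mve T v₀‖ := hmax huK
          have h2 : mve T v = ‖v‖ • mve T u := by
            rw [hudef, _root_.map_smul, smul_smul, mul_inv_cancel₀ hvn, one_smul]
          rw [h2, norm_smul]
          simp only [norm_norm]
          rw [mul_comm (‖mve T v₀‖)]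
          exact mul_le_mul_of_nonneg_left h1 (norm_nonneg v)
  -- error sequence
  set eE : ℕ → EuclideanSpace ℝ (Fin d) := fun k => sy (w₀ k) - wcE with heEdef
  have hestep : ∀ k, eE (k + 1) = mve T (eE k) := by
    intro k
    have hpi : w₀ (k + 1) - wc = T *ᵥ (w₀ k - wc) := by
      rw [hrec' k, Matrix.mulVec_sub]
      nth_rewrite 1 [hfix]
      abel
    have h1 : eE (k + 1) = sy (w₀ (k + 1) - wc) := rfl
    have h2 : mve T (eE k) = sy (T *ᵥ (w₀ k - wc)) := rfl
    rw [h1, h2, hpi]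
  have he0 : eE 0 = -wcE := by
    rw [heEdef]
    simp only [hinit]
    have : sy (0 : Fin d → ℝ) = 0 := rfl
    rw [this, zero_sub]
  have hiter : ∀ k, eE k ∈ S ∧ ‖eE k‖ ≤ c ^ k * ‖eE 0‖ := by
    intro k
    induction k with
    | zero => exact ⟨by rw [he0]; exact S.neg_mem hwcS, by simp⟩
    | succ n ih =>
      obtain ⟨hS1, hb1⟩ := ih
      refine ⟨by rw [hestep n]; exact hTS _ hS1, ?_⟩
      rw [hestep n]
      calc ‖mve T (eE n)‖ ≤ c * ‖eE n‖ := hcb _ hS1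
        _ ≤ c * (c ^ n * ‖eE 0‖) := mul_le_mul_of_nonneg_left hb1 hc0
        _ = c ^ (n + 1) * ‖eE 0‖ := by ring
  -- convergence
  have htend0 : Tendsto (fun k => ‖eE k‖) atTop (nhds 0) := by
    have hgeo : Tendsto (fun k : ℕ => c ^ k * ‖eE 0‖) atTop (nhds 0) := by
      have := (tendsto_pow_atTop_nhds_zero_of_lt_one hc0 hc1).mul_const (‖eE 0‖)
      simpa using this
    exact squeeze_zero (fun k => norm_nonneg _) (fun k => (hiter k).2) hgeo
  have htendE : Tendsto (fun k => sy (w₀ k)) atTop (nhds wcE) := by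
    rw [tendsto_iff_norm_sub_tendsto_zero]
    exact htend0
  have hφ : Continuous (WithLp.equiv 2 (Fin d → ℝ) : EuclideanSpace ℝ (Fin d) → Fin d → ℝ) :=
    (PiLp.continuousLinearEquiv 2 ℝ (fun _ : Fin d => ℝ)).continuous
  have := (hφ.tendsto wcE).comp htendE
  exact this
end

section
/- Let C₁,…,C_M be nonempty closed convex subsets of ℝᵈ with ⋂ᵢ Cᵢ ≠ ∅, let w⁰ ∈ ℝᵈ, and let (αᵏ) ⊂ [0,1) satisfy αᵏ → 1, Σₖ (1 - αᵏ) = ∞, and Σₖ |α^{k+1} - αᵏ| < ∞. Then the iterates w^{k+1} = (1 - α^{k+1}) w⁰ + α^{k+1} (1/M) Σᵢ P_{Cᵢ}(wᵏ) converge to P_{C̄}(w⁰), the projection of w⁰ onto the intersection C̄ = ⋂ᵢ Cᵢ. -/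
open Filter

section Helpers

lemma var_ineq {E : Type*} [NormedAddCommGroup E] [InnerProductSpace ℝ E]
    {K : Set E} (hK : Convex ℝ K) {x z : E} (hz : z ∈ K)
    (hmin : ∀ y ∈ K, ‖x - z‖ ≤ ‖x - y‖) :
    ∀ y ∈ K, (inner ℝ (x - z) (y - z) : ℝ) ≤ 0 := by
  haveI : Nonempty K := ⟨⟨z, hz⟩⟩
  rw [← norm_eq_iInf_iff_real_inner_le_zero hK hz]
  refine le_antisymm (le_ciInf fun y => hmin y y.2)
    (ciInf_le (f := fun w : K => ‖x - (w : E)‖) ⟨(0:ℝ), fun _ ⟨_, h⟩ => h ▸ norm_nonneg _⟩ ⟨z, hz⟩)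

lemma prod_tendsto_zero {γ : ℕ → ℝ} (h0 : ∀ k, 0 ≤ γ k) (h1 : ∀ k, γ k ≤ 1)
    (hdiv : ¬ Summable γ) (N : ℕ) :
    Tendsto (fun k => ∏ j ∈ Finset.Ico N k, (1 - γ j)) atTop (nhds 0) := by
  have hsum : Tendsto (fun k => ∑ j ∈ Finset.range k, γ j) atTop atTop :=
    (not_summable_iff_tendsto_nat_atTop_of_nonneg h0).1 hdiv
  have hsum2 : Tendsto (fun k => ∑ j ∈ Finset.Ico N k, γ j) atTop atTop := by
    have : Tendsto (fun k => ∑ j ∈ Finset.range k, γ j - ∑ j ∈ Finset.range N, γ j)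
        atTop atTop := hsum.atTop_add tendsto_const_nhds
    refine this.congr' ?_
    filter_upwards [eventually_ge_atTop N] with k hk
    rw [Finset.sum_Ico_eq_sub _ hk]
  have hexp : Tendsto (fun k => Real.exp (-(∑ j ∈ Finset.Ico N k, γ j))) atTop (nhds 0) :=
    Real.tendsto_exp_atBot.comp (tendsto_neg_atBot_iff.2 hsum2)
  refine squeeze_zero (fun k => Finset.prod_nonneg fun j _ => by linarith [h1 j]) (fun k => ?_) hexp
  calc ∏ j ∈ Finset.Ico N k, (1 - γ j) ≤ ∏ j ∈ Finset.Ico N k, Real.exp (-(γ j)) :=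
        Finset.prod_le_prod (fun j _ => by linarith [h1 j])
          (fun j _ => by linarith [Real.add_one_le_exp (-(γ j))])
    _ = Real.exp (-(∑ j ∈ Finset.Ico N k, γ j)) := by
        rw [← Real.exp_sum, Finset.sum_neg_distrib]

lemma xu_lemma {s γ β δ : ℕ → ℝ} (hs : ∀ k, 0 ≤ s k)
    (hγ0 : ∀ k, 0 ≤ γ k) (hγ1 : ∀ k, γ k ≤ 1)
    (hγdiv : ¬ Summable γ)
    (hδ0 : ∀ k, 0 ≤ δ k) (hδ : Summable δ)
    (hβ : ∀ ε > 0, ∀ᶠ k in atTop, β k ≤ ε)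
    (hrec : ∀ k, s (k + 1) ≤ (1 - γ k) * s k + γ k * β k + δ k) :
    Tendsto s atTop (nhds 0) := by
  rw [NormedAddCommGroup.tendsto_nhds_zero]
  intro ε hε
  set ε' := ε / 4 with hε'def
  have hε' : 0 < ε' := by positivity
  obtain ⟨N₀, hN₀⟩ := (hβ ε' hε').exists_forall_of_atTop
  have htail : Tendsto (fun i => ∑' k, δ (k + i)) atTop (nhds 0) := tendsto_sum_nat_add δ
  obtain ⟨N₁', hN₁'⟩ := (htail.eventually (eventually_le_nhds hε')).exists_forall_of_atTop
  set N := max N₀ N₁' with hNdef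
  have hDle : ∀ m, ∑ j ∈ Finset.Ico N m, δ j ≤ ε' := by
    intro m
    calc ∑ j ∈ Finset.Ico N m, δ j = ∑ j ∈ Finset.range (m - N), δ (N + j) :=
          Finset.sum_Ico_eq_sum_range δ N m
      _ ≤ ∑' k, δ (N + k) :=
          Summable.sum_le_tsum _ (fun j _ => hδ0 _)
            (((summable_nat_add_iff N).2 hδ).congr fun k => by rw [Nat.add_comm])
      _ = ∑' k, δ (k + N) := tsum_congr fun k => by rw [Nat.add_comm]
      _ ≤ ε' := hN₁' N (le_max_right _ _)
  have claim : ∀ k, s (N + k) ≤ (∏ j ∈ Finset.Ico N (N + k), (1 - γ j)) * s N + ε'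
      + ∑ j ∈ Finset.Ico N (N + k), δ j := by
    intro k
    induction k with
    | zero => simp; linarith [hε'.le]
    | succ k ih =>
      have hn : N ≤ N + k := Nat.le_add_right _ _
      have hβn : β (N + k) ≤ ε' := hN₀ (N + k) (le_trans (le_max_left _ _) hn)
      have hrec' := hrec (N + k)
      have hP0 : 0 ≤ ∏ j ∈ Finset.Ico N (N + k), (1 - γ j) :=
        Finset.prod_nonneg fun j _ => by linarith [hγ1 j]
      have hD0 : 0 ≤ ∑ j ∈ Finset.Ico N (N + k), δ j :=
        Finset.sum_nonneg fun j _ => hδ0 j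
      have h1 : (0:ℝ) ≤ 1 - γ (N + k) := by linarith [hγ1 (N + k)]
      have key : s (N + k + 1) ≤ (1 - γ (N + k)) *
          ((∏ j ∈ Finset.Ico N (N + k), (1 - γ j)) * s N + ε'
            + ∑ j ∈ Finset.Ico N (N + k), δ j) + γ (N + k) * ε' + δ (N + k) := by
        have h2 : γ (N + k) * β (N + k) ≤ γ (N + k) * ε' :=
          mul_le_mul_of_nonneg_left hβn (hγ0 _)
        nlinarith [mul_le_mul_of_nonneg_left ih h1]
      rw [show N + (k + 1) = (N + k) + 1 from rfl]
      rw [Finset.prod_Ico_succ_top hn, Finset.sum_Ico_succ_top hn]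
      have hγk := hγ0 (N + k)
      nlinarith [mul_nonneg (mul_nonneg hP0 (hγ0 (N+k))) (hs N),
        mul_nonneg (hγ0 (N+k)) hD0, key]
  have hPtend : Tendsto (fun k => (∏ j ∈ Finset.Ico N (N + k), (1 - γ j)) * s N)
      atTop (nhds 0) := by
    have h := ((prod_tendsto_zero hγ0 hγ1 hγdiv N).comp (tendsto_add_atTop_nat N)).mul_const (s N)
    simp only [zero_mul] at h
    exact h.congr fun k => by rw [Function.comp_apply, Nat.add_comm]
  have hev : ∀ᶠ k in atTop, (∏ j ∈ Finset.Ico N (N + k), (1 - γ j)) * s N < ε' :=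
    hPtend.eventually (eventually_lt_nhds hε')
  obtain ⟨K, hK⟩ := hev.exists_forall_of_atTop
  rw [eventually_atTop]
  refine ⟨N + K, fun n hn => ?_⟩
  obtain ⟨k, rfl⟩ := Nat.exists_eq_add_of_le (le_trans (Nat.le_add_right N K) hn)
  have hk : K ≤ k := by omega
  rw [Real.norm_eq_abs, abs_of_nonneg (hs (N + k))]
  linarith [claim k, hDle (N + k), hK k hk]

end Helpers

set_option maxHeartbeats 1000000 in
/-- Anchored (Halpern-type) parallel projection method: with `αᵏ ∈ [0,1)`, `αᵏ → 1`,
`Σ (1-αᵏ) = ∞`, `Σ |α^{k+1} - αᵏ| < ∞`, the iterates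
`w^{k+1} = (1-α^{k+1}) w⁰ + α^{k+1} (1/M)Σᵢ P_{Cᵢ}(wᵏ)` converge to the projection of
`w⁰` onto `C̄ = ⋂ᵢ Cᵢ`. -/
theorem stmt_15 {d M : ℕ} (hM : 0 < M)
    (C : Fin M → Set (EuclideanSpace ℝ (Fin d)))
    (hne : ∀ i, (C i).Nonempty) (hcl : ∀ i, IsClosed (C i)) (hcv : ∀ i, Convex ℝ (C i))
    (hint : (⋂ i, C i).Nonempty)
    (proj : Fin M → EuclideanSpace ℝ (Fin d) → EuclideanSpace ℝ (Fin d))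
    (hproj : ∀ i x, proj i x ∈ C i ∧ ∀ z ∈ C i, ‖x - proj i x‖ ≤ ‖x - z‖)
    (projC : EuclideanSpace ℝ (Fin d) → EuclideanSpace ℝ (Fin d))
    (hprojC : ∀ x, projC x ∈ ⋂ i, C i ∧ ∀ z ∈ ⋂ i, C i, ‖x - projC x‖ ≤ ‖x - z‖)
    (α : ℕ → ℝ) (hα01 : ∀ k, 0 ≤ α k ∧ α k < 1)
    (hα1 : Tendsto α atTop (nhds 1))
    (hαdiv : ¬ Summable (fun k => 1 - α k))
    (hαsum : Summable (fun k => |α (k + 1) - α k|))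
    (w₀ : EuclideanSpace ℝ (Fin d)) (w : ℕ → EuclideanSpace ℝ (Fin d))
    (hinit : w 0 = w₀)
    (hrec : ∀ k, w (k + 1) =
      (1 - α (k + 1)) • w₀ + α (k + 1) • ((M : ℝ)⁻¹ • ∑ i, proj i (w k))) :
    Tendsto w atTop (nhds (projC w₀)) := by
  set p := projC w₀ with hp
  set T : EuclideanSpace ℝ (Fin d) → EuclideanSpace ℝ (Fin d) :=
    fun x => (M : ℝ)⁻¹ • ∑ i, proj i x with hTdef
  have hMR : (0:ℝ) < (M:ℝ) := Nat.cast_pos.2 hM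
  -- variational inequality for each projection
  have hvar : ∀ i x, ∀ y ∈ C i, (inner ℝ (x - proj i x) (y - proj i x) : ℝ) ≤ 0 :=
    fun i x => var_ineq (hcv i) (hproj i x).1 (hproj i x).2
  -- projections fix members
  have hfixP : ∀ i x, x ∈ C i → proj i x = x := by
    intro i x hx
    have h := (hproj i x).2 x hx
    simp only [sub_self, norm_zero] at h
    have : x - proj i x = 0 := norm_le_zero_iff.1 h
    exact (eq_of_sub_eq_zero this).symm
  have hpmem : ∀ i, p ∈ C i := fun i => Set.mem_iInter.1 (hprojC w₀).1 i
  -- nonexpansiveness of each projection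
  have hnonexp : ∀ i x y, ‖proj i x - proj i y‖ ≤ ‖x - y‖ := by
    intro i x y
    have key : ‖proj i x - proj i y‖^2 ≤ (inner ℝ (x - y) (proj i x - proj i y) : ℝ) := by
      have e1 : (inner ℝ (x - proj i x) (proj i y - proj i x) : ℝ)
          = - inner ℝ (x - proj i x) (proj i x - proj i y) := by
        rw [← inner_neg_right]; congr 1; abel
      have e2 : (inner ℝ (y - proj i y) (proj i x - proj i y) : ℝ) ≤ 0 :=
        hvar i y _ (hproj i x).1
      have e3 : (inner ℝ (x - y) (proj i x - proj i y) : ℝ)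
          = inner ℝ (x - proj i x) (proj i x - proj i y)
            + inner ℝ (proj i x - proj i y) (proj i x - proj i y)
            + inner ℝ (proj i y - y) (proj i x - proj i y) := by
        rw [← inner_add_left, ← inner_add_left]; congr 1; abel
      have e4 : (inner ℝ (proj i y - y) (proj i x - proj i y) : ℝ)
          = - inner ℝ (y - proj i y) (proj i x - proj i y) := by
        rw [← inner_neg_left]; congr 1; abel
      have h1' : (0:ℝ) ≤ inner ℝ (x - proj i x) (proj i x - proj i y) := by
        have := hvar i x _ (hproj i y).1; rw [e1] at this; linarith
      rw [e3, e4, real_inner_self_eq_norm_sq]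
      linarith
    have hcs := real_inner_le_norm (x - y) (proj i x - proj i y)
    nlinarith [norm_nonneg (proj i x - proj i y), norm_nonneg (x - y)]
  -- strong (Pythagorean) inequality
  have hstrong : ∀ i x z, z ∈ C i →
      ‖x - proj i x‖^2 + ‖proj i x - z‖^2 ≤ ‖x - z‖^2 := by
    intro i x z hz
    have h := hvar i x z hz
    have e : ‖x - z‖^2 = ‖x - proj i x‖^2
        - 2 * (inner ℝ (x - proj i x) (z - proj i x) : ℝ) + ‖z - proj i x‖^2 := by
      rw [← norm_sub_sq_real]; congr 1; congr 1; abel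
    have e2 : ‖proj i x - z‖ = ‖z - proj i x‖ := norm_sub_rev _ _
    rw [e2]; linarith
  -- T fixes p
  have hTp : T p = p := by
    rw [hTdef]
    simp only
    rw [Finset.sum_congr rfl (fun i _ => hfixP i p (hpmem i)), Finset.sum_const,
      Finset.card_univ, Fintype.card_fin, ← Nat.cast_smul_eq_nsmul ℝ, smul_smul,
      inv_mul_cancel₀ hMR.ne', one_smul]
  -- T nonexpansive
  have hTnonexp : ∀ x y, ‖T x - T y‖ ≤ ‖x - y‖ := by
    intro x y
    rw [hTdef]
    simp only
    rw [← smul_sub, ← Finset.sum_sub_distrib]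
    have h1 : ‖∑ i : Fin M, (proj i x - proj i y)‖ ≤ (M:ℝ) * ‖x - y‖ := by
      refine (norm_sum_le _ _).trans ?_
      calc ∑ i : Fin M, ‖proj i x - proj i y‖ ≤ ∑ _i : Fin M, ‖x - y‖ :=
            Finset.sum_le_sum fun i _ => hnonexp i x y
        _ = (M:ℝ) * ‖x - y‖ := by
            rw [Finset.sum_const, Finset.card_univ, Fintype.card_fin, nsmul_eq_mul]
    rw [norm_smul, Real.norm_eq_abs, abs_of_nonneg (by positivity)]
    calc (M:ℝ)⁻¹ * ‖∑ i : Fin M, (proj i x - proj i y)‖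
        ≤ (M:ℝ)⁻¹ * ((M:ℝ) * ‖x - y‖) := by
          exact mul_le_mul_of_nonneg_left h1 (by positivity)
      _ = ‖x - y‖ := by field_simp
  have hTk' : ∀ k, ‖T (w k) - p‖ ≤ ‖w k - p‖ := fun k => by
    have := hTnonexp (w k) p; rwa [hTp] at this
  -- recurrence in convenient form
  have hstep : ∀ k, w (k + 1) - p
      = (1 - α (k + 1)) • (w₀ - p) + α (k + 1) • (T (w k) - p) := by
    intro k
    rw [hrec k, hTdef]
    simp only
    module
  set R := ‖w₀ - p‖ with hR
  -- boundedness
  have hbnd : ∀ k, ‖w k - p‖ ≤ R := by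
    intro k
    induction k with
    | zero => rw [hinit]
    | succ k ih =>
      have ha := hα01 (k + 1)
      have hTk : ‖T (w k) - p‖ ≤ R := (hTk' k).trans ih
      rw [hstep k]
      refine (norm_add_le _ _).trans ?_
      rw [norm_smul, norm_smul, Real.norm_eq_abs, Real.norm_eq_abs,
        abs_of_nonneg (by linarith : (0:ℝ) ≤ 1 - α (k + 1)), abs_of_nonneg ha.1]
      nlinarith [mul_le_mul_of_nonneg_left hTk ha.1]
  have hRnn : (0:ℝ) ≤ R := norm_nonneg _
  have hTbnd : ∀ k, ‖T (w k) - w₀‖ ≤ 2 * R := by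
    intro k
    calc ‖T (w k) - w₀‖ = ‖(T (w k) - p) + (p - w₀)‖ := by rw [sub_add_sub_cancel]
      _ ≤ ‖T (w k) - p‖ + ‖p - w₀‖ := norm_add_le _ _
      _ ≤ R + R := by
          rw [norm_sub_rev p w₀]
          exact add_le_add ((hTk' k).trans (hbnd k)) le_rfl
      _ = 2 * R := by ring
  -- asymptotic regularity
  have hreg : Tendsto (fun k => ‖w (k + 1) - w k‖) atTop (nhds 0) := by
    refine xu_lemma (s := fun k => ‖w (k + 1) - w k‖) (γ := fun k => 1 - α (k + 2))
      (β := fun _ => 0) (δ := fun k => 2 * R * |α (k + 2) - α (k + 1)|)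
      (fun k => norm_nonneg _)
      (fun k => by show (0:ℝ) ≤ 1 - α (k + 2); linarith [(hα01 (k + 2)).2])
      (fun k => by show 1 - α (k + 2) ≤ 1; linarith [(hα01 (k + 2)).1])
      ?_ (fun k => by positivity) ?_ ?_ ?_
    · intro h; exact hαdiv ((summable_nat_add_iff 2).1 h)
    · exact ((summable_nat_add_iff 1).2 hαsum).mul_left (2 * R)
    · exact fun ε hε => Eventually.of_forall fun k => hε.le
    · intro k
      have hid : w (k + 2) - w (k + 1)
          = α (k + 2) • (T (w (k + 1)) - T (w k)) + (α (k + 2) - α (k + 1)) • (T (w k) - w₀) := by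
        have h1 := hrec (k + 1)
        have h2 := hrec k
        rw [hTdef]
        simp only
        rw [show k + 2 = (k + 1) + 1 from rfl, h1, h2]
        module
      have ha2 := hα01 (k + 2)
      calc ‖w (k + 1 + 1) - w (k + 1)‖
          = ‖α (k + 2) • (T (w (k + 1)) - T (w k)) + (α (k + 2) - α (k + 1)) • (T (w k) - w₀)‖ := by
            rw [show k + 1 + 1 = k + 2 from rfl, hid]
        _ ≤ α (k + 2) * ‖w (k + 1) - w k‖ + |α (k + 2) - α (k + 1)| * (2 * R) := by
            refine (norm_add_le _ _).trans ?_
            rw [norm_smul, norm_smul, Real.norm_eq_abs, Real.norm_eq_abs,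
              abs_of_nonneg ha2.1]
            exact add_le_add (mul_le_mul_of_nonneg_left (hTnonexp _ _) ha2.1)
              (mul_le_mul_of_nonneg_left (hTbnd k) (abs_nonneg _))
        _ ≤ (1 - (1 - α (k + 2))) * ‖w (k + 1) - w k‖ + (1 - α (k + 2)) * 0
            + 2 * R * |α (k + 2) - α (k + 1)| := le_of_eq (by ring)
  have h1mα : Tendsto (fun k => 1 - α (k + 1)) atTop (nhds 0) := by
    have h : Tendsto (fun k => 1 - α k) atTop (nhds 0) := by
      simpa using hα1.const_sub 1
    exact h.comp (tendsto_add_atTop_nat 1)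
  -- ‖w k - T (w k)‖ → 0
  have hTreg : Tendsto (fun k => ‖w k - T (w k)‖) atTop (nhds 0) := by
    have hb : ∀ k, ‖w k - T (w k)‖ ≤ ‖w (k + 1) - w k‖ + (1 - α (k + 1)) * (2 * R) := by
      intro k
      have hid : w (k + 1) - T (w k) = (1 - α (k + 1)) • (w₀ - T (w k)) := by
        rw [hrec k, hTdef]; simp only; module
      have h2 : ‖w (k + 1) - T (w k)‖ ≤ (1 - α (k + 1)) * (2 * R) := by
        rw [hid, norm_smul, Real.norm_eq_abs,
          abs_of_nonneg (by linarith [(hα01 (k + 1)).2] : (0:ℝ) ≤ 1 - α (k + 1))]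
        refine mul_le_mul_of_nonneg_left ?_ (by linarith [(hα01 (k + 1)).2])
        rw [norm_sub_rev]; exact hTbnd k
      calc ‖w k - T (w k)‖ = ‖(w k - w (k + 1)) + (w (k + 1) - T (w k))‖ := by
            rw [sub_add_sub_cancel]
        _ ≤ ‖w k - w (k + 1)‖ + ‖w (k + 1) - T (w k)‖ := norm_add_le _ _
        _ ≤ ‖w (k + 1) - w k‖ + (1 - α (k + 1)) * (2 * R) := by
            rw [norm_sub_rev]; exact add_le_add le_rfl h2
    have hg : Tendsto (fun k => ‖w (k + 1) - w k‖ + (1 - α (k + 1)) * (2 * R))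
        atTop (nhds 0) := by
      have := hreg.add (h1mα.mul_const (2 * R))
      simpa using this
    exact squeeze_zero (fun k => norm_nonneg _) hb hg
  -- key limsup-type estimate
  have hCcv : Convex ℝ (⋂ i, C i) := convex_iInter fun i => hcv i
  have key : ∀ ε > 0, ∀ᶠ k in atTop, (inner ℝ (w₀ - p) (w k - p) : ℝ) ≤ ε := by
    by_contra hcon
    push_neg at hcon
    obtain ⟨ε, hε, hfreq⟩ := hcon
    obtain ⟨φ, hφmono, hφ⟩ := extraction_of_frequently_atTop hfreq
    have hball : ∀ n, w (φ n) ∈ Metric.closedBall p R := fun n => by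
      rw [Metric.mem_closedBall, dist_eq_norm]; exact hbnd (φ n)
    obtain ⟨x, -, ψ, hψmono, hψlim⟩ :=
      tendsto_subseq_of_bounded Metric.isBounded_closedBall hball
    have hψlim' : Tendsto (fun n => w (φ (ψ n))) atTop (nhds x) := hψlim
    have hdist : Tendsto (fun n => ‖x - w (φ (ψ n))‖) atTop (nhds 0) := by
      have := tendsto_iff_norm_sub_tendsto_zero.1 hψlim'
      exact this.congr fun n => (norm_sub_rev _ _)
    have hsubreg : Tendsto (fun n => ‖w (φ (ψ n)) - T (w (φ (ψ n)))‖) atTop (nhds 0) :=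
      hTreg.comp ((hφmono.comp hψmono).tendsto_atTop)
    have hTx : T x = x := by
      have hb : ∀ n, ‖x - T x‖ ≤ 2 * ‖x - w (φ (ψ n))‖ + ‖w (φ (ψ n)) - T (w (φ (ψ n)))‖ := by
        intro n
        calc ‖x - T x‖
            = ‖(x - w (φ (ψ n))) + (w (φ (ψ n)) - T (w (φ (ψ n)))) + (T (w (φ (ψ n))) - T x)‖ := by
              congr 1; abel
          _ ≤ ‖x - w (φ (ψ n))‖ + ‖w (φ (ψ n)) - T (w (φ (ψ n)))‖ + ‖T (w (φ (ψ n))) - T x‖ :=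
              norm_add₃_le
          _ ≤ 2 * ‖x - w (φ (ψ n))‖ + ‖w (φ (ψ n)) - T (w (φ (ψ n)))‖ := by
              have := hTnonexp (w (φ (ψ n))) x
              rw [norm_sub_rev (w (φ (ψ n))) x] at this
              linarith
      have hlim : Tendsto (fun n => 2 * ‖x - w (φ (ψ n))‖
          + ‖w (φ (ψ n)) - T (w (φ (ψ n)))‖) atTop (nhds 0) := by
        have := (hdist.const_mul 2).add hsubreg
        simpa using this
      have h0 : ‖x - T x‖ ≤ 0 := ge_of_tendsto hlim (Eventually.of_forall hb)
      have : x - T x = 0 := norm_le_zero_iff.1 h0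
      exact (eq_of_sub_eq_zero this).symm
    -- x is in the intersection
    have hxmem : x ∈ ⋂ i, C i := by
      have hproj_eq : ∀ i : Fin M, proj i x = x := by
        have hsum_eq : ∑ i : Fin M, (proj i x - p) = (M:ℝ) • (x - p) := by
          have hTx' : (M:ℝ) • T x = ∑ i : Fin M, proj i x := by
            rw [hTdef]; simp only [smul_smul, mul_inv_cancel₀ hMR.ne', one_smul]
          calc ∑ i : Fin M, (proj i x - p)
              = (∑ i : Fin M, proj i x) - (M:ℝ) • p := by
                rw [Finset.sum_sub_distrib, Finset.sum_const, Finset.card_univ,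
                  Fintype.card_fin, ← Nat.cast_smul_eq_nsmul ℝ]
            _ = (M:ℝ) • T x - (M:ℝ) • p := by rw [hTx']
            _ = (M:ℝ) • (x - p) := by rw [hTx, smul_sub]
        have hnorm_ge : (M:ℝ) * ‖x - p‖ ≤ ∑ i : Fin M, ‖proj i x - p‖ := by
          calc (M:ℝ) * ‖x - p‖ = ‖(M:ℝ) • (x - p)‖ := by
                rw [norm_smul, Real.norm_eq_abs, abs_of_nonneg hMR.le]
            _ = ‖∑ i : Fin M, (proj i x - p)‖ := by rw [hsum_eq]
            _ ≤ ∑ i : Fin M, ‖proj i x - p‖ := norm_sum_le _ _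
        have hle : ∀ i : Fin M, ‖proj i x - p‖ ≤ ‖x - p‖ := fun i => by
          have := hnonexp i x p; rwa [hfixP i p (hpmem i)] at this
        have heq : ∀ i : Fin M, ‖proj i x - p‖ = ‖x - p‖ := by
          by_contra hcontra
          push_neg at hcontra
          obtain ⟨i₀, hi₀⟩ := hcontra
          have hlt : ∑ i : Fin M, ‖proj i x - p‖ < ∑ _i : Fin M, ‖x - p‖ :=
            Finset.sum_lt_sum (fun i _ => hle i)
              ⟨i₀, Finset.mem_univ _, lt_of_le_of_ne (hle i₀) hi₀⟩
          rw [Finset.sum_const, Finset.card_univ, Fintype.card_fin, nsmul_eq_mul] at hlt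
          linarith
        intro i
        have hst := hstrong i x p (hpmem i)
        rw [heq i] at hst
        have h3 : ‖x - proj i x‖^2 ≤ 0 := by linarith
        have h4 : ‖x - proj i x‖ = 0 :=
          le_antisymm (by nlinarith [norm_nonneg (x - proj i x)]) (norm_nonneg _)
        have : x - proj i x = 0 := norm_eq_zero.1 h4
        exact (eq_of_sub_eq_zero this).symm
      exact Set.mem_iInter.2 fun i => hproj_eq i ▸ (hproj i x).1
    have hvarC : (inner ℝ (w₀ - p) (x - p) : ℝ) ≤ 0 :=
      var_ineq hCcv (hprojC w₀).1 (hprojC w₀).2 x hxmem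
    have hinner : Tendsto (fun n => (inner ℝ (w₀ - p) (w (φ (ψ n)) - p) : ℝ)) atTop
        (nhds (inner ℝ (w₀ - p) (x - p) : ℝ)) :=
      tendsto_const_nhds.inner (hψlim'.sub tendsto_const_nhds)
    have hge : ε ≤ (inner ℝ (w₀ - p) (x - p) : ℝ) :=
      ge_of_tendsto hinner (Eventually.of_forall fun n => (hφ (ψ n)).le)
    linarith
  -- final recurrence and conclusion
  have hfin : ∀ k, ‖w (k + 1) - p‖^2 ≤ (1 - (1 - α (k + 1))) * ‖w k - p‖^2
      + (1 - α (k + 1)) * (2 * (inner ℝ (w₀ - p) (w (k + 1) - p) : ℝ)) + 0 := by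
    intro k
    have ha := hα01 (k + 1)
    have hy := hstep k
    have hiy : ‖w (k + 1) - p‖^2
        = (1 - α (k + 1)) * (inner ℝ (w₀ - p) (w (k + 1) - p) : ℝ)
          + α (k + 1) * (inner ℝ (T (w k) - p) (w (k + 1) - p) : ℝ) := by
      rw [← real_inner_self_eq_norm_sq]
      nth_rewrite 1 [hy]
      rw [inner_add_left, real_inner_smul_left, real_inner_smul_left]
    have hcs : (inner ℝ (T (w k) - p) (w (k + 1) - p) : ℝ) ≤ ‖w k - p‖ * ‖w (k + 1) - p‖ :=
      (real_inner_le_norm _ _).trans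
        (mul_le_mul_of_nonneg_right (hTk' k) (norm_nonneg _))
    nlinarith [sq_nonneg (‖w k - p‖ - ‖w (k + 1) - p‖), sq_nonneg ‖w (k + 1) - p‖,
      mul_le_mul_of_nonneg_left hcs ha.1]
  have hsq : Tendsto (fun k => ‖w k - p‖^2) atTop (nhds 0) := by
    refine xu_lemma (s := fun k => ‖w k - p‖^2) (γ := fun k => 1 - α (k + 1))
      (β := fun k => 2 * (inner ℝ (w₀ - p) (w (k + 1) - p) : ℝ)) (δ := fun _ => 0)
      (fun k => sq_nonneg _)
      (fun k => by show (0:ℝ) ≤ 1 - α (k + 1); linarith [(hα01 (k + 1)).2])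
      (fun k => by show 1 - α (k + 1) ≤ 1; linarith [(hα01 (k + 1)).1])
      ?_ (fun k => le_rfl) summable_zero ?_ ?_
    · intro h; exact hαdiv ((summable_nat_add_iff 1).1 h)
    · intro ε hε
      obtain ⟨N, hN⟩ := (key (ε / 2) (by positivity)).exists_forall_of_atTop
      rw [eventually_atTop]
      refine ⟨N, fun k hk => ?_⟩
      show 2 * (inner ℝ (w₀ - p) (w (k + 1) - p) : ℝ) ≤ ε
      have := hN (k + 1) (hk.trans (Nat.le_succ k))
      linarith
    · intro k; exact hfin k
  · have hnrm : Tendsto (fun k => ‖w k - p‖) atTop (nhds 0) := by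
      have := (Real.continuous_sqrt.tendsto 0).comp hsq
      simp only [Function.comp_def, Real.sqrt_zero] at this
      exact this.congr fun k => Real.sqrt_sq (norm_nonneg _)
    exact tendsto_iff_norm_sub_tendsto_zero.2 hnrm
end
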